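/- arXiv:1209.0873 — 6 statements merged into one kernel-verified Lean document; each statement's English description precedes it below -/
import Mathlib

section
/- For every m ≥ -1 and p > 1, the function f₄(x) = (arsinh_p(x)/x)^m · (1 + x^p)^{-1/p} is decreasing on (0,1). -/
open Real Set

/-- Power mean `M_t(x,y)`. -/
noncomputable def powerMean (t x y : ℝ) : ℝ :=
  if t = 0 then Real.sqrt (x * y) else ((x ^ t + y ^ t) / 2) ^ (1 / t)

/-- Generalized arcsine: `arcsin_p x = ∫₀ˣ (1 - u^p)^(-1/p) du`. -/
noncomputable def arcsinp (p x : ℝ) : ℝ := ∫ u in (0:ℝ)..x, (1 - u ^ p) ^ (-(1 / p))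

/-- Generalized inverse hyperbolic tangent: `artanh_p x = ∫₀ˣ (1 - u^p)⁻¹ du`. -/
noncomputable def artanhp (p x : ℝ) : ℝ := ∫ u in (0:ℝ)..x, (1 - u ^ p)⁻¹

/-- Generalized arctangent: `arctan_p x = ∫₀ˣ (1 + u^p)⁻¹ du`. -/
noncomputable def arctanp (p x : ℝ) : ℝ := ∫ u in (0:ℝ)..x, (1 + u ^ p)⁻¹

/-- Generalized inverse hyperbolic sine: `arsinh_p x = ∫₀ˣ (1 + u^p)^(-1/p) du`. -/
noncomputable def arsinhp (p x : ℝ) : ℝ := ∫ u in (0:ℝ)..x, (1 + u ^ p) ^ (-(1 / p))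

/-- Generalized pi: `π_p = 2π/(p sin(π/p))`. -/
noncomputable def pip (p : ℝ) : ℝ := 2 * Real.pi / (p * Real.sin (Real.pi / p))
lemma aux_ne {p : ℝ} (hp : 1 < p) {u : ℝ} (hu : -(1/2) < u) : 1 + u ^ p ≠ 0 := by
  rcases le_or_gt 0 u with h | h
  · have := Real.rpow_nonneg h p
    positivity
  · have h1 : |u ^ p| ≤ |u| ^ p := Real.abs_rpow_le_abs_rpow u p
    have hu1 : |u| < 1/2 := by rw [abs_of_neg h]; linarith
    have h2 : |u| ^ p ≤ |u| ^ (1:ℝ) :=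
      Real.rpow_le_rpow_of_exponent_ge (abs_pos.2 h.ne) (by linarith) (by linarith)
    rw [Real.rpow_one] at h2
    have : |u ^ p| < 1/2 := by linarith
    have := abs_lt.1 this
    intro hcon
    linarith [this.1]

lemma aux_contAt {p : ℝ} (hp : 1 < p) {u : ℝ} (hu : 1 + u ^ p ≠ 0) :
    ContinuousAt (fun t : ℝ => (1 + t ^ p) ^ (-(1 / p))) u := by
  have h1 : ContinuousAt (fun t : ℝ => 1 + t ^ p) u :=
    continuousAt_const.add (Real.continuousAt_rpow_const u p (Or.inr (by linarith)))
  exact h1.rpow_const (Or.inl hu)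

lemma aux_intable {p : ℝ} (hp : 1 < p) {x : ℝ} (hx : 0 < x) :
    IntervalIntegrable (fun t : ℝ => (1 + t ^ p) ^ (-(1 / p))) MeasureTheory.volume 0 x := by
  apply ContinuousOn.intervalIntegrable
  intro u hu
  rw [Set.uIcc_of_le hx.le] at hu
  exact (aux_contAt hp (aux_ne hp (by linarith [hu.1]))).continuousWithinAt

lemma arsinhp_hasDerivAt {p : ℝ} (hp : 1 < p) {x : ℝ} (hx : 0 < x) :
    HasDerivAt (arsinhp p) ((1 + x ^ p) ^ (-(1 / p))) x := by
  have hcont : ∀ u ∈ Set.Ioi (-(1/2):ℝ), ContinuousAt (fun t : ℝ => (1 + t ^ p) ^ (-(1 / p))) u :=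
    fun u hu => aux_contAt hp (aux_ne hp hu)
  have hmem : x ∈ Set.Ioi (-(1/2):ℝ) := by simp; linarith
  exact intervalIntegral.integral_hasDerivAt_right (aux_intable hp hx)
    (ContinuousAt.stronglyMeasurableAtFilter isOpen_Ioi hcont x hmem) (hcont x hmem)

lemma arsinhp_le {p : ℝ} (hp : 1 < p) {x : ℝ} (hx : 0 < x) : arsinhp p x ≤ x := by
  have h := intervalIntegral.integral_mono_on (μ := MeasureTheory.volume) hx.le
    (aux_intable hp hx) intervalIntegrable_const
    (g := fun _ => (1:ℝ)) (fun u hu => by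
      have h0 : (0:ℝ) ≤ u ^ p := Real.rpow_nonneg hu.1 p
      have : (0:ℝ) ≤ 1/p := by positivity
      exact Real.rpow_le_one_of_one_le_of_nonpos (by linarith) (by linarith))
  simpa [arsinhp] using h

lemma arsinhp_ge {p : ℝ} (hp : 1 < p) {x : ℝ} (hx : 0 < x) :
    x * (1 + x ^ p) ^ (-(1 / p)) ≤ arsinhp p x := by
  have h := intervalIntegral.integral_mono_on (μ := MeasureTheory.volume) hx.le
    intervalIntegrable_const (aux_intable hp hx)
    (f := fun _ => (1 + x ^ p) ^ (-(1 / p))) (fun u hu => by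
      have h1 : u ^ p ≤ x ^ p := Real.rpow_le_rpow hu.1 hu.2 (by linarith)
      have h2 : (0:ℝ) < 1 + u ^ p := by
        have := Real.rpow_nonneg hu.1 p; linarith
      have : (0:ℝ) ≤ 1/p := by positivity
      exact Real.rpow_le_rpow_of_nonpos h2 (by linarith) (by linarith))
  simpa [arsinhp, smul_eq_mul, mul_comm] using h

lemma aux_main (m p : ℝ) (hm : -1 ≤ m) (hp : 1 < p) {x : ℝ} (hx : x ∈ Set.Ioo (0:ℝ) 1) :
    ∃ d, HasDerivAt (fun x : ℝ => (arsinhp p x / x) ^ m * (1 + x ^ p) ^ (-(1 / p))) d x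
      ∧ d < 0 := by
  obtain ⟨hx0, hx1⟩ := hx
  have hp0 : (0:ℝ) < p := by linarith
  set a := arsinhp p x with ha
  set Y := 1 + x ^ p with hYdef
  set Fx := Y ^ (-(1/p)) with hFxdef
  have hxp : (0:ℝ) < x ^ p := Real.rpow_pos_of_pos hx0 p
  have hY1 : (1:ℝ) < Y := by rw [hYdef]; linarith
  have hY0 : (0:ℝ) < Y := by linarith
  have hFx0 : (0:ℝ) < Fx := Real.rpow_pos_of_pos hY0 _
  have haxF : x * Fx ≤ a := arsinhp_ge hp hx0
  have hax : a ≤ x := arsinhp_le hp hx0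
  have ha0 : (0:ℝ) < a := lt_of_lt_of_le (by positivity) haxF
  set g := a / x with hgdef
  have hg0 : (0:ℝ) < g := div_pos ha0 hx0
  -- derivative pieces
  have hA : HasDerivAt (arsinhp p) Fx x := arsinhp_hasDerivAt hp hx0
  have h1 : HasDerivAt (fun x => arsinhp p x / x) ((Fx * x - a * 1) / x ^ 2) x :=
    hA.div (hasDerivAt_id x) hx0.ne'
  have h2 : HasDerivAt (fun x => (arsinhp p x / x) ^ m)
      ((Fx * x - a * 1) / x ^ 2 * m * g ^ (m - 1)) x :=
    h1.rpow_const (Or.inl hg0.ne')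
  have h3i : HasDerivAt (fun x : ℝ => 1 + x ^ p) (p * x ^ (p - 1)) x :=
    (Real.hasDerivAt_rpow_const (Or.inl hx0.ne')).const_add 1
  have h3 : HasDerivAt (fun x : ℝ => (1 + x ^ p) ^ (-(1/p)))
      (p * x ^ (p - 1) * (-(1/p)) * Y ^ (-(1/p) - 1)) x :=
    h3i.rpow_const (Or.inl hY0.ne')
  have hf := h2.mul h3
  refine ⟨_, hf, ?_⟩
  -- clean up the derivative
  have hE : Y ^ (-(1/p) - 1) = Fx / Y := by
    rw [Real.rpow_sub hY0, Real.rpow_one]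
  have hgm : g ^ m = g ^ (m - 1) * g := by
    rw [← Real.rpow_add_one hg0.ne' (m - 1)]; ring_nf
  have hxpm : x ^ (p - 1) = x ^ p / x := by
    rw [Real.rpow_sub hx0, Real.rpow_one]
  have hcalc : (Fx * x - a * 1) / x ^ 2 * m * g ^ (m - 1) * Fx
      + g ^ m * (p * x ^ (p - 1) * (-(1/p)) * Y ^ (-(1/p) - 1))
      = g ^ (m - 1) * Fx * ((m * (Fx * x - a) * Y - a * x ^ p) / (x ^ 2 * Y)) := by
    rw [hE, hgm, hxpm, hgdef]
    field_simp
    ring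
  rw [hcalc]
  apply mul_neg_of_pos_of_neg (by positivity)
  apply div_neg_of_neg_of_pos _ (by positivity)
  rw [sub_neg]
  have hcomm : Fx * x = x * Fx := mul_comm _ _
  have hB : Fx * x - a ≤ 0 := by linarith
  have hFY : 1 < Fx * Y := by
    have h : Y ^ (-(1/p) + 1) = Fx * Y := by
      rw [Real.rpow_add hY0, Real.rpow_one]
    have hexp : 0 < -(1/p) + 1 := by
      have : 1/p < 1 := by rw [div_lt_one hp0]; linarith
      linarith
    have := (Real.one_lt_rpow_iff_of_pos hY0).2 (Or.inl ⟨hY1, hexp⟩)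
    linarith [h ▸ this]
  have h5 : (a - Fx * x) * Y < a * x ^ p := by
    have h6 : x * 1 < x * (Fx * Y) := mul_lt_mul_of_pos_left hFY hx0
    have h7 : a < x * (Fx * Y) := lt_of_le_of_lt hax (by linarith)
    have h8 : a * Y - a * x ^ p = a := by rw [hYdef]; ring
    nlinarith [h7, h8]
  rcases le_or_gt 0 m with hm0 | hm0
  · have h4 : m * (Fx * x - a) ≤ 0 := mul_nonpos_of_nonneg_of_nonpos hm0 hB
    have h4Y : m * (Fx * x - a) * Y ≤ 0 := mul_nonpos_of_nonpos_of_nonneg h4 hY0.le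
    have hap : 0 < a * x ^ p := mul_pos ha0 hxp
    linarith
  · have h4 : m * (Fx * x - a) ≤ a - Fx * x := by
      have h9 := mul_nonpos_of_nonneg_of_nonpos (by linarith : (0:ℝ) ≤ m + 1) hB
      nlinarith [h9]
    have h4Y : m * (Fx * x - a) * Y ≤ (a - Fx * x) * Y :=
      mul_le_mul_of_nonneg_right h4 hY0.le
    linarith

theorem arsinhp_aux_strictAnti (m p : ℝ) (hm : -1 ≤ m) (hp : 1 < p) :
    StrictAntiOn (fun x : ℝ => (arsinhp p x / x) ^ m * (1 + x ^ p) ^ (-(1 / p)))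
      (Set.Ioo (0:ℝ) 1) := by
  apply strictAntiOn_of_deriv_neg (convex_Ioo 0 1)
  · intro x hx
    exact (aux_main m p hm hp hx).choose_spec.1.continuousAt.continuousWithinAt
  · rw [interior_Ioo]
    intro x hx
    obtain ⟨d, hd, hd0⟩ := aux_main m p hm hp hx
    rw [hd.deriv]
    exact hd0
end

section
/- For every s ∈ (0,1), the function f(p) = (π_p/p)^{-s} · (p − π·cot(π/p)) · csc(π/p) / p³ is decreasing in p on (1, ∞). -/
open Real Set

/-- The substituted function `g₀(t) = t^(2-2s) (sin t)^(s-2) (sin t - t cos t)`. -/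
noncomputable def g0 (s t : ℝ) : ℝ :=
  t ^ (2 - 2*s) * Real.sin t ^ (s - 2) * (Real.sin t - t * Real.cos t)

lemma sin_sub_mul_cos_pos {t : ℝ} (h0 : 0 < t) (hπ : t < Real.pi) :
    0 < Real.sin t - t * Real.cos t := by
  have hsin : 0 < Real.sin t := Real.sin_pos_of_pos_of_lt_pi h0 hπ
  rcases le_or_gt (Real.cos t) 0 with hc | hc
  · nlinarith
  · have ht2 : t < Real.pi / 2 := by
      by_contra h
      push_neg at h
      have := Real.cos_nonpos_of_pi_div_two_le_of_le h (by linarith [Real.pi_pos])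
      linarith
    have h1 := Real.lt_tan h0 ht2
    rw [Real.tan_eq_sin_div_cos] at h1
    have := (lt_div_iff₀ hc).mp h1
    linarith

lemma mul_cos_sin_lt {t : ℝ} (h0 : 0 < t) : Real.sin t * Real.cos t < t := by
  have h := Real.sin_lt (by linarith : 0 < 2 * t)
  rw [Real.sin_two_mul] at h
  linarith

lemma Hpos {s t : ℝ} (hs : s ∈ Set.Ioo (0:ℝ) 1) (h0 : 0 < t) (hπ : t < Real.pi) :
    0 < (2 - 2*s) * Real.sin t * (Real.sin t - t * Real.cos t)
      + (s - 2) * (t * Real.cos t) * (Real.sin t - t * Real.cos t)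
      + t^2 * Real.sin t^2 := by
  have hsin : 0 < Real.sin t := Real.sin_pos_of_pos_of_lt_pi h0 hπ
  have h1 := sin_sub_mul_cos_pos h0 hπ
  have h2 := mul_cos_sin_lt h0
  have key : (2 - 2*s) * Real.sin t * (Real.sin t - t * Real.cos t)
      + (s - 2) * (t * Real.cos t) * (Real.sin t - t * Real.cos t)
      + t^2 * Real.sin t^2
      = (1 - s) * (2 * (Real.sin t - t * Real.cos t)^2 + t^2 * Real.sin t^2)
        + s * (t * (t - Real.sin t * Real.cos t)) := by
    linear_combination (s * t^2) * Real.sin_sq_add_cos_sq t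
  rw [key]
  have hs0 := hs.1
  have hs1 := hs.2
  have p1 : 0 < 2 * (Real.sin t - t * Real.cos t)^2 + t^2 * Real.sin t^2 := by positivity
  have p2 : 0 < t * (t - Real.sin t * Real.cos t) := by
    apply mul_pos h0; linarith
  nlinarith

lemma g0_hasDeriv (s : ℝ) {t : ℝ} (h0 : 0 < t) (hπ : t < Real.pi) :
    HasDerivAt (g0 s)
      (((2 - 2*s) * t ^ (2 - 2*s - 1) * Real.sin t ^ (s - 2)
          + t ^ (2 - 2*s) * ((s - 2) * Real.sin t ^ (s - 2 - 1) * Real.cos t))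
          * (Real.sin t - t * Real.cos t)
        + t ^ (2 - 2*s) * Real.sin t ^ (s - 2) * (t * Real.sin t)) t := by
  have hsin : 0 < Real.sin t := Real.sin_pos_of_pos_of_lt_pi h0 hπ
  have hA : HasDerivAt (fun x : ℝ => x ^ (2 - 2*s)) ((2 - 2*s) * t ^ (2 - 2*s - 1)) t :=
    Real.hasDerivAt_rpow_const (Or.inl h0.ne')
  have hB : HasDerivAt (fun x : ℝ => Real.sin x ^ (s - 2))
      ((s - 2) * Real.sin t ^ (s - 2 - 1) * Real.cos t) t := by
    have := (Real.hasDerivAt_sin t).rpow_const (p := s - 2) (Or.inl hsin.ne')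
    convert this using 1
    ring
  have hC : HasDerivAt (fun x : ℝ => Real.sin x - x * Real.cos x) (t * Real.sin t) t := by
    have h1 := (Real.hasDerivAt_sin t)
    have h2 := (hasDerivAt_id t).mul (Real.hasDerivAt_cos t)
    have h3 := h1.sub h2
    simp only [id] at h3
    exact h3.congr_deriv (by ring)
  have := (hA.mul hB).mul hC
  exact this

lemma g0_strictMono (s : ℝ) (hs : s ∈ Set.Ioo (0:ℝ) 1) :
    StrictMonoOn (g0 s) (Set.Ioo (0:ℝ) Real.pi) := by
  apply strictMonoOn_of_deriv_pos (convex_Ioo 0 Real.pi)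
  · intro t ht
    exact (g0_hasDeriv s ht.1 ht.2).continuousAt.continuousWithinAt
  · intro t ht
    rw [interior_Ioo] at ht
    obtain ⟨h0, hπ⟩ := ht
    have hsin : 0 < Real.sin t := Real.sin_pos_of_pos_of_lt_pi h0 hπ
    rw [(g0_hasDeriv s h0 hπ).deriv]
    have e1 : t ^ (2 - 2*s) = t ^ (1 - 2*s) * t := by
      rw [show (2 - 2*s) = (1 - 2*s) + 1 by ring, Real.rpow_add h0, Real.rpow_one]
    have e2 : t ^ (2 - 2*s - 1) = t ^ (1 - 2*s) := by rw [show (2 - 2*s - 1) = 1 - 2*s by ring]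
    have e3 : Real.sin t ^ (s - 2) = Real.sin t ^ (s - 3) * Real.sin t := by
      rw [show (s - 2) = (s - 3) + 1 by ring, Real.rpow_add hsin, Real.rpow_one]
    have e4 : Real.sin t ^ (s - 2 - 1) = Real.sin t ^ (s - 3) := by
      rw [show (s - 2 - 1) = s - 3 by ring]
    rw [e2, e4, e1, e3]
    have key : ((2 - 2*s) * t ^ (1 - 2*s) * (Real.sin t ^ (s - 3) * Real.sin t)
          + t ^ (1 - 2*s) * t * ((s - 2) * Real.sin t ^ (s - 3) * Real.cos t))
          * (Real.sin t - t * Real.cos t)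
        + t ^ (1 - 2*s) * t * (Real.sin t ^ (s - 3) * Real.sin t) * (t * Real.sin t)
        = t ^ (1 - 2*s) * Real.sin t ^ (s - 3) *
          ((2 - 2*s) * Real.sin t * (Real.sin t - t * Real.cos t)
            + (s - 2) * (t * Real.cos t) * (Real.sin t - t * Real.cos t)
            + t^2 * Real.sin t^2) := by ring
    rw [key]
    have := Hpos hs h0 hπ
    positivity

lemma f_eq (s : ℝ) {p : ℝ} (hp : 1 < p) :
    (pip p / p) ^ (-s) *
          ((p - Real.pi * (Real.cos (Real.pi / p) / Real.sin (Real.pi / p))) *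
            (Real.sin (Real.pi / p))⁻¹) / p ^ 3
      = 2 ^ (-s) * Real.pi ^ (s - 2) * g0 s (Real.pi / p) := by
  have hp0 : (0:ℝ) < p := lt_trans one_pos hp
  set t := Real.pi / p with ht
  have h0 : 0 < t := div_pos Real.pi_pos hp0
  have hπ : t < Real.pi := div_lt_self Real.pi_pos hp
  have hsin : 0 < Real.sin t := Real.sin_pos_of_pos_of_lt_pi h0 hπ
  have hpt : p * t = Real.pi := by rw [ht]; field_simp
  have step1 : pip p / p = 2 * t^2 / (Real.pi * Real.sin t) := by
    rw [pip, ← ht, div_div, div_eq_div_iff (by positivity) (by positivity)]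
    linear_combination (-(2 * Real.sin t * (p * t + Real.pi))) * hpt
  rw [step1]
  have step2 : (2 * t^2 / (Real.pi * Real.sin t)) ^ (-s)
      = Real.pi ^ s * Real.sin t ^ s / (2 ^ s * t ^ (2*s)) := by
    rw [Real.rpow_neg (by positivity), ← Real.inv_rpow (by positivity), inv_div,
      Real.div_rpow (by positivity) (by positivity),
      Real.mul_rpow Real.pi_pos.le hsin.le,
      Real.mul_rpow (by norm_num) (by positivity)]
    congr 1
    rw [← Real.rpow_natCast t 2, ← Real.rpow_mul h0.le]
    norm_num
  rw [step2, g0]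
  have e1 : t ^ (2 - 2*s) = t ^ 2 / t ^ (2*s) := by
    rw [← Real.rpow_natCast t 2, ← Real.rpow_sub h0]
    norm_num
  have e2 : Real.sin t ^ (s - 2) = Real.sin t ^ s / Real.sin t ^ 2 := by
    rw [← Real.rpow_natCast (Real.sin t) 2, ← Real.rpow_sub hsin]
    norm_num
  have e3 : Real.pi ^ (s - 2) = Real.pi ^ s / Real.pi ^ 2 := by
    rw [← Real.rpow_natCast Real.pi 2, ← Real.rpow_sub Real.pi_pos]
    norm_num
  have e4 : (2:ℝ) ^ (-s) = (2 ^ s)⁻¹ := by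
    rw [Real.rpow_neg (by norm_num)]
  rw [e1, e2, e3, e4]
  have h2s : (0:ℝ) < (2:ℝ) ^ s := by positivity
  have hts : (0:ℝ) < t ^ (2*s) := by positivity
  field_simp
  linear_combination ((Real.cos t * (Real.pi^2 + Real.pi * p * t + p^2 * t^2)
      - p * Real.sin t * (Real.pi + p * t))) * hpt

theorem pip_aux_strictAnti (s : ℝ) (hs : s ∈ Set.Ioo (0:ℝ) 1) :
    StrictAntiOn (fun p : ℝ =>
        (pip p / p) ^ (-s) *
          ((p - Real.pi * (Real.cos (Real.pi / p) / Real.sin (Real.pi / p))) *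
            (Real.sin (Real.pi / p))⁻¹) / p ^ 3)
      (Set.Ioi (1:ℝ)) := by
  intro p1 hp1 p2 hp2 hlt
  simp only [Set.mem_Ioi] at hp1 hp2
  have hmem : ∀ p : ℝ, 1 < p → Real.pi / p ∈ Set.Ioo (0:ℝ) Real.pi := fun p hp =>
    ⟨div_pos Real.pi_pos (lt_trans one_pos hp), div_lt_self Real.pi_pos hp⟩
  have hC : (0:ℝ) < 2 ^ (-s) * Real.pi ^ (s - 2) := by positivity
  simp only
  rw [f_eq s hp1, f_eq s hp2]
  rw [mul_assoc, mul_assoc]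
  apply mul_lt_mul_of_pos_left _ (by positivity : (0:ℝ) < 2 ^ (-s))
  apply mul_lt_mul_of_pos_left _ (by positivity : (0:ℝ) < Real.pi ^ (s - 2))
  exact g0_strictMono s hs (hmem p2 hp2) (hmem p1 hp1)
    (div_lt_div_of_pos_left Real.pi_pos (lt_trans one_pos hp1) hlt)
end

section
/- For every m ≥ 1 and p > 1, the function h₁(x) = (sin_p(x)/x)^{m-1} · (1 − (sin_p x)^p)^{1/p} is decreasing on (0,1). -/
open Real Set

noncomputable def wfun (p u : ℝ) : ℝ := (1 - u ^ p) ^ (-(1 / p))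

lemma pip_gt_two {p : ℝ} (hp : 1 < p) : 2 < pip p := by
  have hp0 : 0 < p := lt_trans one_pos hp
  have h1 : 0 < Real.pi / p := div_pos Real.pi_pos hp0
  have h2 : Real.pi / p < Real.pi := by
    rw [div_lt_iff₀ hp0]; nlinarith [Real.pi_pos]
  have hs : 0 < Real.sin (Real.pi / p) := Real.sin_pos_of_pos_of_lt_pi h1 h2
  have hlt : Real.sin (Real.pi / p) < Real.pi / p := Real.sin_lt h1
  have hps : 0 < p * Real.sin (Real.pi / p) := mul_pos hp0 hs
  have hπ : p * Real.sin (Real.pi / p) < Real.pi := by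
    have := mul_lt_mul_of_pos_left hlt hp0
    have heq : p * (Real.pi / p) = Real.pi := by field_simp
    linarith [heq ▸ this]
  rw [pip, lt_div_iff₀ hps]
  nlinarith

lemma base_pos {p u : ℝ} (hp : 1 < p) (hu : u ∈ Ico (0:ℝ) 1) : 0 < 1 - u ^ p := by
  have : u ^ p < 1 := Real.rpow_lt_one hu.1 hu.2 (by linarith)
  linarith

lemma w_one_le {p u : ℝ} (hp : 1 < p) (hu : u ∈ Ico (0:ℝ) 1) : 1 ≤ wfun p u := by
  have hb := base_pos hp hu
  have hb1 : 1 - u ^ p ≤ 1 := by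
    have : 0 ≤ u ^ p := Real.rpow_nonneg hu.1 p
    linarith
  have h1 : (1 - u ^ p) ^ (1/p) ≤ 1 := Real.rpow_le_one (le_of_lt hb) hb1 (by positivity)
  have h2 : 0 < (1 - u ^ p) ^ (1/p) := Real.rpow_pos_of_pos hb _
  rw [wfun, Real.rpow_neg (le_of_lt hb)]
  exact (one_le_inv₀ h2).mpr h1

lemma w_mono {p u v : ℝ} (hp : 1 < p) (hu : u ∈ Ico (0:ℝ) 1) (hv : v ∈ Ico (0:ℝ) 1)
    (huv : u ≤ v) : wfun p u ≤ wfun p v := by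
  have hpu := base_pos hp hu
  have hpv := base_pos hp hv
  have h1 : u ^ p ≤ v ^ p := Real.rpow_le_rpow hu.1 huv (by linarith)
  have h2 : (1 - v ^ p) ^ (1/p) ≤ (1 - u ^ p) ^ (1/p) :=
    Real.rpow_le_rpow (le_of_lt hpv) (by linarith) (by positivity)
  rw [wfun, wfun, Real.rpow_neg hpu.le, Real.rpow_neg hpv.le]
  exact inv_anti₀ (Real.rpow_pos_of_pos hpv _) h2

lemma w_contOn {p : ℝ} (hp : 1 < p) : ContinuousOn (wfun p) (Ico (0:ℝ) 1) := by
  intro u hu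
  have h1 : ContinuousAt (fun u : ℝ => (1:ℝ) - u ^ p) u :=
    continuousAt_const.sub (Real.continuousAt_rpow_const u p (Or.inr (by linarith)))
  have h2 : ContinuousAt (fun t : ℝ => t ^ (-(1/p))) (1 - u ^ p) :=
    Real.continuousAt_rpow_const _ _ (Or.inl (ne_of_gt (base_pos hp hu)))
  have h3 : ContinuousAt ((fun t : ℝ => t ^ (-(1/p))) ∘ fun u : ℝ => (1:ℝ) - u ^ p) u :=
    ContinuousAt.comp h2 h1
  exact h3.continuousWithinAt

lemma w_int {p a b : ℝ} (hp : 1 < p) (ha : 0 ≤ a) (hab : a ≤ b) (hb : b < 1) :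
    IntervalIntegrable (wfun p) MeasureTheory.volume a b := by
  apply ContinuousOn.intervalIntegrable
  apply (w_contOn hp).mono
  rw [uIcc_of_le hab]
  exact fun x hx => ⟨le_trans ha hx.1, lt_of_le_of_lt hx.2 hb⟩

lemma integral_lb {p a b : ℝ} (hp : 1 < p) (ha : 0 ≤ a) (hab : a ≤ b) (hb : b < 1) :
    (b - a) * wfun p a ≤ ∫ u in a..b, wfun p u := by
  have h := intervalIntegral.integral_mono_on hab intervalIntegrable_const
    (w_int hp ha hab hb)
    (fun x hx => w_mono hp ⟨ha, lt_of_le_of_lt hab hb⟩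
      ⟨le_trans ha hx.1, lt_of_le_of_lt hx.2 hb⟩ hx.1)
  simpa [intervalIntegral.integral_const, smul_eq_mul] using h

lemma integral_ub {p a : ℝ} (hp : 1 < p) (ha : 0 ≤ a) (ha1 : a < 1) :
    (∫ u in (0:ℝ)..a, wfun p u) ≤ a * wfun p a := by
  have h := intervalIntegral.integral_mono_on ha (w_int hp le_rfl ha ha1)
    intervalIntegrable_const
    (fun x hx => w_mono hp ⟨hx.1, lt_of_le_of_lt hx.2 ha1⟩ ⟨ha, ha1⟩ hx.2)
  simpa [intervalIntegral.integral_const, smul_eq_mul] using h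

lemma integral_ge_one {p a b : ℝ} (hp : 1 < p) (ha : 0 ≤ a) (hab : a ≤ b) (hb : b < 1) :
    b - a ≤ ∫ u in a..b, wfun p u := by
  have h := intervalIntegral.integral_mono_on hab intervalIntegrable_const
    (w_int hp ha hab hb)
    (fun x hx => w_one_le hp (u := x) ⟨le_trans ha hx.1, lt_of_le_of_lt hx.2 hb⟩)
  simpa [intervalIntegral.integral_const, smul_eq_mul] using h

lemma F_add {p a b : ℝ} (hp : 1 < p) (ha : 0 ≤ a) (hab : a ≤ b) (hb : b < 1) :
    (∫ u in (0:ℝ)..b, wfun p u) = (∫ u in (0:ℝ)..a, wfun p u) + ∫ u in a..b, wfun p u :=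
  (intervalIntegral.integral_add_adjacent_intervals
    (w_int hp le_rfl ha (lt_of_le_of_lt hab hb)) (w_int hp ha hab hb)).symm

lemma arcsinp_def (p t : ℝ) : arcsinp p t = ∫ u in (0:ℝ)..t, wfun p u := rfl

lemma F_strictMono {p a b : ℝ} (hp : 1 < p) (ha : 0 ≤ a) (hab : a < b) (hb : b < 1) :
    arcsinp p a < arcsinp p b := by
  rw [arcsinp_def, arcsinp_def, F_add hp ha hab.le hb]
  have := integral_ge_one hp ha hab.le hb
  linarith

lemma F_mean {p a b : ℝ} (hp : 1 < p) (ha : 0 < a) (hab : a ≤ b) (hb : b < 1) :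
    b * arcsinp p a ≤ a * arcsinp p b := by
  rw [arcsinp_def, arcsinp_def]
  have h1 := integral_lb hp ha.le hab hb
  have h2 := integral_ub hp ha.le (lt_of_le_of_lt hab hb)
  have h3 := F_add hp ha.le hab hb
  nlinarith [ha.le, sub_nonneg.mpr hab]

theorem sinp_aux_strictAnti (m p : ℝ) (hm : 1 ≤ m) (hp : 1 < p)
    (sinp : ℝ → ℝ)
    (hmem : ∀ y ∈ Set.Ioo (0:ℝ) (pip p / 2), sinp y ∈ Set.Ioo (0:ℝ) 1)
    (hinv : ∀ y ∈ Set.Ioo (0:ℝ) (pip p / 2), arcsinp p (sinp y) = y) :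
    StrictAntiOn (fun x : ℝ => (sinp x / x) ^ (m - 1) * (1 - (sinp x) ^ p) ^ (1 / p))
      (Set.Ioo (0:ℝ) 1) := by
  have hpip := pip_gt_two hp
  intro x hx y hy hxy
  have hx' : x ∈ Set.Ioo (0:ℝ) (pip p / 2) := ⟨hx.1, by linarith [hx.2]⟩
  have hy' : y ∈ Set.Ioo (0:ℝ) (pip p / 2) := ⟨hy.1, by linarith [hy.2]⟩
  have haI := hmem x hx'
  have hbI := hmem y hy'
  have hFa : arcsinp p (sinp x) = x := hinv x hx'
  have hFb : arcsinp p (sinp y) = y := hinv y hy'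
  set a := sinp x with ha_def
  set b := sinp y with hb_def
  have hab : a < b := by
    rcases lt_trichotomy a b with h | h | h
    · exact h
    · exfalso; rw [h, hFb] at hFa; linarith
    · exfalso
      have := F_strictMono hp hbI.1.le h haI.2
      rw [hFa, hFb] at this; linarith
  have key : b * x ≤ a * y := by
    have := F_mean hp haI.1 hab.le hbI.2
    rwa [hFa, hFb] at this
  have hf : b / y ≤ a / x := by
    rw [div_le_div_iff₀ hy.1 hx.1]
    linarith
  have hfpos : 0 < b / y := div_pos hbI.1 hy.1
  have hbase_a : 0 < 1 - a ^ p := base_pos hp ⟨haI.1.le, haI.2⟩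
  have hbase_b : 0 < 1 - b ^ p := base_pos hp ⟨hbI.1.le, hbI.2⟩
  have hg : (1 - b ^ p) ^ (1/p) < (1 - a ^ p) ^ (1/p) := by
    have h1 : a ^ p < b ^ p := Real.rpow_lt_rpow haI.1.le hab (by linarith)
    exact Real.rpow_lt_rpow hbase_b.le (by linarith) (by positivity)
  have hg_pos : 0 < (1 - b ^ p) ^ (1/p) := Real.rpow_pos_of_pos hbase_b _
  have hfe : (b / y) ^ (m-1) ≤ (a / x) ^ (m-1) :=
    Real.rpow_le_rpow hfpos.le hf (by linarith)
  have hfe_pos : 0 < (a / x) ^ (m-1) :=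
    Real.rpow_pos_of_pos (lt_of_lt_of_le hfpos hf) _
  simpa using mul_lt_mul' hfe hg hg_pos.le hfe_pos
end

section
/- For every m ≥ 1 and p > 1, the function h₂(x) = (tanh_p(x)/x)^{m-1} · (1 − (tanh_p x)^p) is decreasing on (0,1). -/
open Real Set

lemma aux_rpow_lt_one {p b t : ℝ} (hp : 0 < p) (ht0 : 0 ≤ t) (htb : t ≤ b) (hb : b < 1) :
    t ^ p < 1 :=
  lt_of_le_of_lt (Real.rpow_le_rpow ht0 htb hp.le) (Real.rpow_lt_one (ht0.trans htb) hb hp)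

lemma aux_contOn {p b : ℝ} (hp : 0 < p) (hb : b < 1) :
    ContinuousOn (fun t : ℝ => (1 - t ^ p)⁻¹) (Set.Icc 0 b) := by
  apply ContinuousOn.inv₀
  · exact continuousOn_const.sub (continuousOn_id.rpow_const (fun x _ => Or.inr hp.le))
  · intro t ht
    have := aux_rpow_lt_one hp ht.1 ht.2 hb
    exact ne_of_gt (by linarith)

lemma aux_ii {p a b c : ℝ} (hp : 0 < p) (h0a : 0 ≤ a) (hab : a ≤ b) (hbc : b ≤ c)
    (hc : c < 1) :
    IntervalIntegrable (fun t : ℝ => (1 - t ^ p)⁻¹) MeasureTheory.volume a b := by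
  apply ContinuousOn.intervalIntegrable
  rw [uIcc_of_le hab]
  exact (aux_contOn hp hc).mono (Set.Icc_subset_Icc h0a hbc)

lemma artanhp_strictMono {p a b : ℝ} (hp : 0 < p) (ha : 0 ≤ a) (hab : a < b) (hb : b < 1) :
    artanhp p a < artanhp p b := by
  have hi1 : IntervalIntegrable (fun t : ℝ => (1 - t ^ p)⁻¹) MeasureTheory.volume 0 a :=
    aux_ii hp le_rfl ha (by linarith) hb
  have hi2 : IntervalIntegrable (fun t : ℝ => (1 - t ^ p)⁻¹) MeasureTheory.volume a b :=
    aux_ii hp ha hab.le le_rfl hb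
  have hsplit : artanhp p a + (∫ t in a..b, (1 - t ^ p)⁻¹) = artanhp p b :=
    intervalIntegral.integral_add_adjacent_intervals hi1 hi2
  have hpos : 0 < ∫ t in a..b, (1 - t ^ p)⁻¹ := by
    apply intervalIntegral.intervalIntegral_pos_of_pos_on hi2 _ hab
    intro t ht
    have : t ^ p < 1 := aux_rpow_lt_one hp (ha.trans ht.1.le) ht.2.le hb
    exact inv_pos.mpr (by linarith)
  linarith

lemma artanhp_ratio_mono {p a b : ℝ} (hp : 0 < p) (ha : 0 < a) (hab : a < b) (hb : b < 1) :
    artanhp p a / a ≤ artanhp p b / b := by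
  set f : ℝ → ℝ := fun t => (1 - t ^ p)⁻¹ with hf
  have hi1 : IntervalIntegrable f MeasureTheory.volume 0 a :=
    aux_ii hp le_rfl ha.le (by linarith) hb
  have hi2 : IntervalIntegrable f MeasureTheory.volume a b :=
    aux_ii hp ha.le hab.le le_rfl hb
  have hfa_pos : 0 < f a := by
    have : a ^ p < 1 := aux_rpow_lt_one hp ha.le hab.le hb
    exact inv_pos.mpr (by linarith)
  have h1 : artanhp p a ≤ a * f a := by
    have : artanhp p a ≤ ∫ _ in (0:ℝ)..a, f a := by
      apply intervalIntegral.integral_mono_on ha.le hi1 intervalIntegrable_const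
      intro t ht
      have htp : t ^ p ≤ a ^ p := Real.rpow_le_rpow ht.1 ht.2 hp.le
      have hap : a ^ p < 1 := aux_rpow_lt_one hp ha.le hab.le hb
      exact inv_anti₀ (by linarith) (by linarith)
    simpa [smul_eq_mul, mul_comm] using this
  have h2 : (b - a) * f a ≤ ∫ t in a..b, f t := by
    have : (∫ _ in a..b, f a) ≤ ∫ t in a..b, f t := by
      apply intervalIntegral.integral_mono_on hab.le intervalIntegrable_const hi2
      intro t ht
      have htp : a ^ p ≤ t ^ p := Real.rpow_le_rpow ha.le ht.1 hp.le
      have htp1 : t ^ p < 1 := aux_rpow_lt_one hp (ha.le.trans ht.1) ht.2 hb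
      exact inv_anti₀ (by linarith) (by linarith)
    simpa [smul_eq_mul, mul_comm] using this
  have hsplit : artanhp p a + (∫ t in a..b, f t) = artanhp p b :=
    intervalIntegral.integral_add_adjacent_intervals hi1 hi2
  rw [div_le_div_iff₀ ha (ha.trans hab)]
  nlinarith [mul_nonneg (sub_nonneg.mpr h1) (sub_pos.mpr hab).le,
    mul_le_mul_of_nonneg_left h2 ha.le]

theorem tanhp_aux_strictAnti (m p : ℝ) (hm : 1 ≤ m) (hp : 1 < p)
    (tanhp : ℝ → ℝ)
    (hmem : ∀ y ∈ Set.Ioi (0:ℝ), tanhp y ∈ Set.Ioo (0:ℝ) 1)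
    (hinv : ∀ y ∈ Set.Ioi (0:ℝ), artanhp p (tanhp y) = y) :
    StrictAntiOn (fun x : ℝ => (tanhp x / x) ^ (m - 1) * (1 - (tanhp x) ^ p))
      (Set.Ioo (0:ℝ) 1) := by
  have hp0 : 0 < p := by linarith
  intro x1 hx1 x2 hx2 h12
  have hx1' : x1 ∈ Set.Ioi (0:ℝ) := hx1.1
  have hx2' : x2 ∈ Set.Ioi (0:ℝ) := hx2.1
  obtain ⟨ht1p, ht1l⟩ := hmem x1 hx1'
  obtain ⟨ht2p, ht2l⟩ := hmem x2 hx2'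
  have he1 : artanhp p (tanhp x1) = x1 := hinv x1 hx1'
  have he2 : artanhp p (tanhp x2) = x2 := hinv x2 hx2'
  set t1 := tanhp x1
  set t2 := tanhp x2
  -- t1 < t2
  have ht12 : t1 < t2 := by
    by_contra h
    push_neg at h
    rcases eq_or_lt_of_le h with heq | hlt
    · rw [← he1, ← he2, heq] at h12; exact lt_irrefl _ h12
    · have := artanhp_strictMono hp0 ht2p.le hlt ht1l
      rw [he1, he2] at this
      linarith
  -- ratio
  have hratio : t2 / x2 ≤ t1 / x1 := by
    have := artanhp_ratio_mono hp0 ht1p ht12 ht2l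
    rw [he1, he2, div_le_div_iff₀ ht1p ht2p] at this
    rw [div_le_div_iff₀ hx2.1 hx1.1]
    linarith
  have hg1 : (t2 / x2) ^ (m - 1) ≤ (t1 / x1) ^ (m - 1) :=
    Real.rpow_le_rpow (div_nonneg ht2p.le hx2.1.le) hratio (by linarith)
  have hg1pos : 0 < (t1 / x1) ^ (m - 1) :=
    Real.rpow_pos_of_pos (div_pos ht1p hx1.1) _
  have ht2p1 : t2 ^ p < 1 := Real.rpow_lt_one ht2p.le ht2l hp0
  have hg2 : 1 - t2 ^ p < 1 - t1 ^ p := by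
    have : t1 ^ p < t2 ^ p := Real.rpow_lt_rpow ht1p.le ht12 hp0
    linarith
  have hg2pos : 0 < 1 - t2 ^ p := by linarith
  calc (t2 / x2) ^ (m - 1) * (1 - t2 ^ p)
      ≤ (t1 / x1) ^ (m - 1) * (1 - t2 ^ p) :=
        mul_le_mul_of_nonneg_right hg1 hg2pos.le
    _ < (t1 / x1) ^ (m - 1) * (1 - t1 ^ p) :=
        mul_lt_mul_of_pos_left hg2 hg1pos
end

section
/- For every m ≥ 1 and p > 1, the function h₄(x) = (tan_p(x)/x)^{m-1} · (1 + (tan_p x)^p) is increasing on (0, b_p), where b_p = arctan_p(1). -/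
open Real Set

section aux

variable {p : ℝ}

private lemma fp_pos (hp : 1 < p) {t : ℝ} (ht : 0 ≤ t) : (0:ℝ) < 1 + t ^ p := by
  have := Real.rpow_nonneg ht p
  linarith

private lemma fp_contOn (hp : 1 < p) :
    ContinuousOn (fun t : ℝ => (1 + t ^ p)⁻¹) (Set.Ici 0) := by
  apply ContinuousOn.inv₀
  · exact continuousOn_const.add (continuousOn_id.rpow_const fun x hx => Or.inr (by linarith))
  · exact fun x hx => ne_of_gt (fp_pos hp hx)

private lemma fp_intble (hp : 1 < p) {a b : ℝ} (ha : 0 ≤ a) (hb : 0 ≤ b) :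
    IntervalIntegrable (fun t : ℝ => (1 + t ^ p)⁻¹) MeasureTheory.volume a b :=
  ((fp_contOn hp).mono fun x hx => le_trans (le_min ha hb) hx.1).intervalIntegrable

private lemma arctanp_add (hp : 1 < p) {u v : ℝ} (hu : 0 ≤ u) (hv : 0 ≤ v) :
    arctanp p v = arctanp p u + ∫ t in u..v, (1 + t ^ p)⁻¹ := by
  rw [arctanp, arctanp,
    intervalIntegral.integral_add_adjacent_intervals (fp_intble hp le_rfl hu) (fp_intble hp hu hv)]

private lemma arctanp_mono (hp : 1 < p) {u v : ℝ} (hu : 0 ≤ u) (huv : u ≤ v) :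
    arctanp p u ≤ arctanp p v := by
  rw [arctanp_add hp hu (hu.trans huv)]
  have : 0 ≤ ∫ t in u..v, (1 + t ^ p)⁻¹ := by
    apply intervalIntegral.integral_nonneg huv
    intro t ht
    exact (inv_pos.mpr (fp_pos hp (hu.trans ht.1))).le
  linarith

private lemma arctanp_pos (hp : 1 < p) {u : ℝ} (hu : 0 < u) : 0 < arctanp p u := by
  rw [arctanp]
  exact intervalIntegral.intervalIntegral_pos_of_pos_on (fp_intble hp le_rfl hu.le)
    (fun t ht => inv_pos.mpr (fp_pos hp ht.1.le)) hu

/-- Key inequality: `u ↦ u / arctanp p u` is strictly increasing on `(0,∞)`. -/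
private lemma key_ineq (hp : 1 < p) {u v : ℝ} (hu : 0 < u) (huv : u < v) :
    u * arctanp p v < v * arctanp p u := by
  have hp0 : 0 < p := by linarith
  have hv : 0 < v := hu.trans huv
  have hI : arctanp p v = arctanp p u + ∫ t in u..v, (1 + t ^ p)⁻¹ :=
    arctanp_add hp hu.le hv.le
  -- arctanp p u > u * (1 + u^p)⁻¹
  have h1 : u * (1 + u ^ p)⁻¹ < arctanp p u := by
    have hpos : 0 < ∫ t in (0:ℝ)..u, ((1 + t ^ p)⁻¹ - (1 + u ^ p)⁻¹) := by
      apply intervalIntegral.intervalIntegral_pos_of_pos_on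
        ((fp_intble hp le_rfl hu.le).sub intervalIntegrable_const)
        (fun t ht => ?_) hu
      have htp : t ^ p < u ^ p := Real.rpow_lt_rpow ht.1.le ht.2 hp0
      have h2 : (1 + u ^ p)⁻¹ < (1 + t ^ p)⁻¹ :=
        inv_strictAnti₀ (fp_pos hp ht.1.le) (by linarith)
      linarith
    rw [intervalIntegral.integral_sub (fp_intble hp le_rfl hu.le) intervalIntegrable_const,
      intervalIntegral.integral_const, sub_zero, smul_eq_mul] at hpos
    rw [arctanp] at *
    nlinarith
  -- ∫ u..v ≤ (v - u) * (1 + u^p)⁻¹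
  have h2 : (∫ t in u..v, (1 + t ^ p)⁻¹) ≤ (v - u) * (1 + u ^ p)⁻¹ := by
    have := intervalIntegral.integral_mono_on (f := fun t : ℝ => (1 + t ^ p)⁻¹)
      (g := fun _ : ℝ => (1 + u ^ p)⁻¹) huv.le (fp_intble hp hu.le hv.le)
      intervalIntegrable_const (fun t ht => by
        have htp : u ^ p ≤ t ^ p := Real.rpow_le_rpow hu.le ht.1 hp0.le
        exact inv_anti₀ (fp_pos hp hu.le) (by linarith))
    rwa [intervalIntegral.integral_const, smul_eq_mul] at this
  nlinarith [h1, h2, sub_pos.mpr huv]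

end aux

theorem tanp_aux_strictMono (m p : ℝ) (hm : 1 ≤ m) (hp : 1 < p)
    (tanp : ℝ → ℝ)
    (hmem : ∀ y ∈ Set.Ioo (0:ℝ) (arctanp p 1), tanp y ∈ Set.Ioo (0:ℝ) 1)
    (hinv : ∀ y ∈ Set.Ioo (0:ℝ) (arctanp p 1), arctanp p (tanp y) = y) :
    StrictMonoOn (fun x : ℝ => (tanp x / x) ^ (m - 1) * (1 + (tanp x) ^ p))
      (Set.Ioo (0:ℝ) (arctanp p 1)) := by
  have hp0 : 0 < p := by linarith
  intro x hx y hy hxy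
  obtain ⟨hx0, hx1⟩ := hx
  obtain ⟨hy0, hy1⟩ := hy
  obtain ⟨hux, hux1⟩ := hmem x ⟨hx0, hx1⟩
  obtain ⟨huy, huy1⟩ := hmem y ⟨hy0, hy1⟩
  have hAx : arctanp p (tanp x) = x := hinv x ⟨hx0, hx1⟩
  have hAy : arctanp p (tanp y) = y := hinv y ⟨hy0, hy1⟩
  -- tanp is strictly increasing
  have huv : tanp x < tanp y := by
    by_contra h
    push_neg at h
    have := arctanp_mono hp huy.le h
    rw [hAx, hAy] at this
    linarith
  -- ratio inequality
  have hratio : tanp x / x < tanp y / y := by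
    rw [div_lt_div_iff₀ hx0 hy0]
    have := key_ineq hp hux huv
    rw [hAx, hAy] at this
    linarith
  -- combine
  have h1le : (tanp x / x) ^ (m - 1) ≤ (tanp y / y) ^ (m - 1) :=
    Real.rpow_le_rpow (div_nonneg hux.le hx0.le) hratio.le (by linarith)
  have h1pos : 0 < (tanp x / x) ^ (m - 1) := Real.rpow_pos_of_pos (div_pos hux hx0) _
  have h2lt : 1 + (tanp x) ^ p < 1 + (tanp y) ^ p := by
    have := Real.rpow_lt_rpow hux.le huv hp0
    linarith
  have h2pos : (0:ℝ) < 1 + (tanp y) ^ p := fp_pos hp huy.le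
  calc (tanp x / x) ^ (m - 1) * (1 + (tanp x) ^ p)
      < (tanp x / x) ^ (m - 1) * (1 + (tanp y) ^ p) := by
        exact mul_lt_mul_of_pos_left h2lt h1pos
    _ ≤ (tanp y / y) ^ (m - 1) * (1 + (tanp y) ^ p) :=
        mul_le_mul_of_nonneg_right h1le h2pos.le
end

section
/- For every m ≥ 1 and p > 1, the function h₅(x) = (sinh_p(x)/x)^{m-1} · (1 + (sinh_p x)^p)^{1/p} is increasing on (0, c_p), where c_p = arsinh_p(1). -/
open Real Set

section aux
variable {p : ℝ}

lemma gpos (hp : 0 < p) {t : ℝ} (ht : 0 ≤ t) : 0 < (1 + t ^ p) ^ (-(1 / p)) := by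
  have := Real.rpow_nonneg ht p
  exact Real.rpow_pos_of_pos (by linarith) _

lemma gcont (hp : 0 < p) : ContinuousOn (fun t : ℝ => (1 + t ^ p) ^ (-(1 / p))) (Ici 0) := by
  apply ContinuousOn.rpow_const
  · exact continuousOn_const.add (continuousOn_id.rpow_const (fun x hx => Or.inr hp.le))
  · intro x hx
    have := Real.rpow_nonneg hx p
    exact Or.inl (by linarith)

lemma ganti (hp : 0 < p) {a b : ℝ} (ha : 0 ≤ a) (hab : a < b) :
    (1 + b ^ p) ^ (-(1 / p)) < (1 + a ^ p) ^ (-(1 / p)) := by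
  have h1 : a ^ p < b ^ p := Real.rpow_lt_rpow ha hab hp
  have h2 : (0:ℝ) < 1 + a ^ p := by have := Real.rpow_nonneg ha p; linarith
  exact Real.rpow_lt_rpow_of_neg h2 (by linarith) (neg_lt_zero.mpr (by positivity))

lemma gint (hp : 0 < p) {a b : ℝ} (ha : 0 ≤ a) (hab : a ≤ b) :
    IntervalIntegrable (fun t : ℝ => (1 + t ^ p) ^ (-(1 / p))) MeasureTheory.volume a b := by
  apply ContinuousOn.intervalIntegrable
  apply (gcont hp).mono
  rw [uIcc_of_le hab]
  exact fun x hx => le_trans ha hx.1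

lemma A_split (hp : 0 < p) {a b : ℝ} (ha : 0 ≤ a) (hab : a ≤ b) :
    arsinhp p b = arsinhp p a + ∫ t in a..b, (1 + t ^ p) ^ (-(1 / p)) := by
  rw [arsinhp, arsinhp]
  exact (intervalIntegral.integral_add_adjacent_intervals (gint hp le_rfl ha) (gint hp ha hab)).symm

lemma A_strictMono (hp : 0 < p) {a b : ℝ} (ha : 0 ≤ a) (hab : a < b) :
    arsinhp p a < arsinhp p b := by
  rw [A_split hp ha hab.le]
  have : 0 < ∫ t in a..b, (1 + t ^ p) ^ (-(1 / p)) := by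
    apply intervalIntegral.intervalIntegral_pos_of_pos_on (gint hp ha hab.le) _ hab
    exact fun t ht => gpos hp (le_trans ha ht.1.le)
  linarith

lemma A_lower (hp : 0 < p) {a : ℝ} (ha : 0 < a) :
    a * (1 + a ^ p) ^ (-(1 / p)) < arsinhp p a := by
  have key : 0 < ∫ t in (0:ℝ)..a, ((1 + t ^ p) ^ (-(1 / p)) - (1 + a ^ p) ^ (-(1 / p))) := by
    apply intervalIntegral.intervalIntegral_pos_of_pos_on
    · exact (gint hp le_rfl ha.le).sub intervalIntegrable_const
    · intro t ht
      have := ganti hp ht.1.le ht.2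
      linarith
    · exact ha
  rw [intervalIntegral.integral_sub (gint hp le_rfl ha.le) intervalIntegrable_const,
    intervalIntegral.integral_const] at key
  rw [arsinhp] at *
  simp only [smul_eq_mul, sub_zero] at key
  linarith

lemma A_upper (hp : 0 < p) {a b : ℝ} (ha : 0 ≤ a) (hab : a < b) :
    (∫ t in a..b, (1 + t ^ p) ^ (-(1 / p))) < (b - a) * (1 + a ^ p) ^ (-(1 / p)) := by
  have key : 0 < ∫ t in a..b, ((1 + a ^ p) ^ (-(1 / p)) - (1 + t ^ p) ^ (-(1 / p))) := by
    apply intervalIntegral.intervalIntegral_pos_of_pos_on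
    · exact intervalIntegrable_const.sub (gint hp ha hab.le)
    · intro t ht
      have := ganti hp ha ht.1
      linarith
    · exact hab
  rw [intervalIntegral.integral_sub intervalIntegrable_const (gint hp ha hab.le),
    intervalIntegral.integral_const] at key
  simp only [smul_eq_mul] at key
  linarith

end aux

theorem sinhp_aux_strictMono (m p : ℝ) (hm : 1 ≤ m) (hp : 1 < p)
    (sinhp : ℝ → ℝ)
    (hmem : ∀ y ∈ Set.Ioo (0:ℝ) (arsinhp p 1), sinhp y ∈ Set.Ioo (0:ℝ) 1)
    (hinv : ∀ y ∈ Set.Ioo (0:ℝ) (arsinhp p 1), arsinhp p (sinhp y) = y) :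
    StrictMonoOn (fun x : ℝ => (sinhp x / x) ^ (m - 1) * (1 + (sinhp x) ^ p) ^ (1 / p))
      (Set.Ioo (0:ℝ) (arsinhp p 1)) := by
  intro x hx y hy hxy
  have hp0 : (0:ℝ) < p := lt_trans one_pos hp
  obtain ⟨hu0, hu1⟩ := hmem x hx
  obtain ⟨hv0, hv1⟩ := hmem y hy
  have hAx : arsinhp p (sinhp x) = x := hinv x hx
  have hAy : arsinhp p (sinhp y) = y := hinv y hy
  set u := sinhp x with hudef
  set v := sinhp y with hvdef
  have huv : u < v := by
    rcases lt_trichotomy u v with h | h | h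
    · exact h
    · rw [h, hAy] at hAx; exact absurd hAx (ne_of_gt hxy)
    · have := A_strictMono hp0 hv0.le h
      rw [hAx, hAy] at this; linarith
  -- second factor
  have hup : u ^ p < v ^ p := Real.rpow_lt_rpow hu0.le huv hp0
  have h2 : (1 + u ^ p) ^ (1/p) < (1 + v ^ p) ^ (1/p) := by
    apply Real.rpow_lt_rpow _ (by linarith) (by positivity)
    have := Real.rpow_nonneg hu0.le p
    linarith
  -- first factor ratio
  have hsplit := A_split hp0 hu0.le huv.le
  have hupper := A_upper hp0 hu0.le huv
  have hlower := A_lower hp0 hu0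
  have hr : u / x < v / y := by
    rw [div_lt_div_iff₀ hx.1 hy.1]
    have e1 : y = arsinhp p u + ∫ t in u..v, (1 + t ^ p) ^ (-(1 / p)) := by
      rw [← hsplit, hAy]
    have e2 : x = arsinhp p u := hAx.symm
    nlinarith [mul_lt_mul_of_pos_left hupper hu0,
      mul_lt_mul_of_pos_left hlower (sub_pos.mpr huv)]
  have ha : (u / x) ^ (m - 1) ≤ (v / y) ^ (m - 1) :=
    Real.rpow_le_rpow (div_nonneg hu0.le hx.1.le) hr.le (by linarith)
  have hb0 : 0 < (1 + u ^ p) ^ (1/p) := by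
    apply Real.rpow_pos_of_pos
    have := Real.rpow_nonneg hu0.le p
    linarith
  have ha0 : 0 < (v / y) ^ (m - 1) := Real.rpow_pos_of_pos (div_pos hv0 hy.1) _
  exact mul_lt_mul' ha h2 hb0.le ha0
end
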